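/- arXiv:2402.00625 — 2 statements merged into one kernel-verified Lean document; each statement's English description precedes it below -/
import Mathlib

section
/- Let X be a set carrying a transfinite decreasing family of relations defined from monotone maps ℰ and 𝒱: L⁰ = ⊤ (the full relation), L^{n+1} = L^n ∩ ℰ(L^n) ∩ 𝒱(L^n, L^n), and L^ω = ⋂_{n<ω} L^n, where ℰ is monotone and 𝒱 is antitone in the first and monotone in the second argument. Then L^{ω+1} := L^ω ∩ ℰ(L^ω) ∩ 𝒱(L^ω, L^ω) equals L^ω, provided ℰ and 𝒱 preserve intersections of decreasing ω-chains in their monotone arguments (i.e., ℰ(⋂_n R_n) = ⋂_n ℰ(R_n) and 𝒱(Q, ⋂_n R_n) = ⋂_n 𝒱(Q, R_n) for decreasing chains, and 𝒱(⋂_n Q_n, R) ⊇ ⋂_n 𝒱(Q_n, R) for decreasing (Q_n)). -/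
/-- Stabilization of the step-indexed logical relation at `ω`:
`L^{ω+1} = L^ω` under continuity assumptions on `ℰ` and `𝒱`. -/
theorem logrel_stabilizes_at_omega {X : Type*}
    (ℰ : Set (X × X) → Set (X × X))
    (𝒱 : Set (X × X) → Set (X × X) → Set (X × X))
    (hℰmono : Monotone ℰ)
    (h𝒱anti : ∀ Q Q' R : Set (X × X), Q ⊆ Q' → 𝒱 Q' R ⊆ 𝒱 Q R)
    (h𝒱mono : ∀ Q : Set (X × X), Monotone (𝒱 Q))
    (L : ℕ → Set (X × X))
    (hL0 : L 0 = Set.univ)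
    (hLs : ∀ n, L (n + 1) = L n ∩ ℰ (L n) ∩ 𝒱 (L n) (L n))
    (hℰcont : ∀ R : ℕ → Set (X × X), (∀ n, R (n + 1) ⊆ R n) →
      ℰ (⋂ n, R n) = ⋂ n, ℰ (R n))
    (h𝒱cont : ∀ (Q : Set (X × X)) (R : ℕ → Set (X × X)), (∀ n, R (n + 1) ⊆ R n) →
      𝒱 Q (⋂ n, R n) = ⋂ n, 𝒱 Q (R n))
    (h𝒱anticont : ∀ (Q : ℕ → Set (X × X)) (R : Set (X × X)),
      (∀ n, Q (n + 1) ⊆ Q n) → (⋂ n, 𝒱 (Q n) R) ⊆ 𝒱 (⋂ n, Q n) R) :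
    (⋂ n, L n) ∩ ℰ (⋂ n, L n) ∩ 𝒱 (⋂ n, L n) (⋂ n, L n) = ⋂ n, L n := by
  have hdec : ∀ n, L (n + 1) ⊆ L n := fun n => by
    rw [hLs]; exact Set.inter_subset_left.trans Set.inter_subset_left
  have hant : Antitone L := antitone_nat_of_succ_le hdec
  apply subset_antisymm
  · exact Set.inter_subset_left.trans Set.inter_subset_left
  · intro x hx
    have hxn : ∀ n, x ∈ L n := Set.mem_iInter.mp hx
    refine ⟨⟨hx, ?_⟩, ?_⟩
    · rw [hℰcont L hdec]
      refine Set.mem_iInter.mpr fun n => ?_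
      have hx' := hxn (n + 1); rw [hLs] at hx'
      exact hx'.1.2
    · rw [h𝒱cont _ L hdec]
      refine Set.mem_iInter.mpr fun m => ?_
      have hQ : ∀ n, L (max (n + 1) m) ⊆ L (max n m) :=
        fun n => hant (max_le_max (Nat.le_succ n) le_rfl)
      have hQeq : (⋂ n, L (max n m)) = ⋂ n, L n := by
        apply subset_antisymm
        · exact Set.iInter_mono fun n => hant (le_max_left n m)
        · intro y hy
          exact Set.mem_iInter.mpr fun n => Set.mem_iInter.mp hy (max n m)
      have h := h𝒱anticont (fun n => L (max n m)) (L m) hQ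
      rw [hQeq] at h
      apply h
      refine Set.mem_iInter.mpr fun n => ?_
      have hx' := hxn (max n m + 1); rw [hLs] at hx'
      exact h𝒱mono _ (hant (le_max_right n m)) hx'.2
end

section
/- For the (untyped, single-sorted version of the) logical-relation adequacy argument: let → be a deterministic reduction relation on a set T of terms, let ⇓ denote termination (t ⇓ iff the →-reduction sequence from t reaches a →-normal form that additionally has a labelled transition), and suppose (L^n) is a decreasing family of relations such that L^{n+1} ⊆ { (t,s) | t → t' → ∃ s', s →* s' ∧ L^n(t',s') } and L^1 ⊆ { (t,s) | t has a labelled transition → s ⇓ }. Then L^ω := ⋂_n L^n is adequate: L^ω(t,s) and t ⇓ imply s ⇓. -/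
/-- Finite-length chains of a relation. -/
def logrel_chain {T : Type*} (step : T → T → Prop) : ℕ → T → T → Prop
  | 0, t, t' => t = t'
  | n + 1, t, t' => ∃ u, step t u ∧ logrel_chain step n u t'

lemma logrel_chain_of_rtg {T : Type*} {step : T → T → Prop} {t t' : T}
    (h : Relation.ReflTransGen step t t') : ∃ n, logrel_chain step n t t' := by
  induction h using Relation.ReflTransGen.head_induction_on with
  | refl => exact ⟨0, rfl⟩
  | head hs _ ih =>
      obtain ⟨n, hc⟩ := ih
      exact ⟨n + 1, _, hs, hc⟩

/-- Adequacy of the step-indexed logical relation w.r.t. termination. -/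
theorem logrel_adequate {T : Type*} (step : T → T → Prop) (V : T → Prop)
    (hdet : ∀ t u v, step t u → step t v → u = v)
    (L : ℕ → T → T → Prop)
    (hdec : ∀ n t s, L (n + 1) t s → L n t s)
    (hE : ∀ n t s, L (n + 1) t s →
      ∀ t', step t t' → ∃ s', Relation.ReflTransGen step s s' ∧ L n t' s')
    (hV : ∀ t s, L 1 t s → V t → ∃ s', Relation.ReflTransGen step s s' ∧ V s') :
    ∀ t s, (∀ n, L n t s) → (∃ t', Relation.ReflTransGen step t t' ∧ V t') →
      ∃ s', Relation.ReflTransGen step s s' ∧ V s' := by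
  have aux : ∀ n t t' s, logrel_chain step n t t' → V t' → L (n + 1) t s →
      ∃ s', Relation.ReflTransGen step s s' ∧ V s' := by
    intro n
    induction n with
    | zero =>
        intro t t' s hc hv hL
        cases hc
        exact hV t s hL hv
    | succ n ih =>
        intro t t' s hc hv hL
        obtain ⟨u, hsu, hc'⟩ := hc
        obtain ⟨s', hss', hL'⟩ := hE (n + 1) t s hL u hsu
        obtain ⟨s'', hss'', hv''⟩ := ih u t' s' hc' hv hL'
        exact ⟨s'', hss'.trans hss'', hv''⟩
  rintro t s hL ⟨t', htt', hv⟩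
  obtain ⟨n, hc⟩ := logrel_chain_of_rtg htt'
  exact aux n t t' s hc hv (hL (n + 1))
end
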